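/- arXiv:2202.05868 — 3 statements merged into one kernel-verified Lean document; each statement's English description precedes it below -/
import Mathlib

section
/- Let τ ∈ [0,1], let V₀, …, V_{h−1} be finite sets with V₀ nonempty, let P_i = V₀ ∪ ⋯ ∪ V_i (with P_{−1} = ∅), let λ = |P_{h−1}| and λ₀ = |V₀|. Suppose that for every 1 ≤ i ≤ h−1 the Jaccard similarity of P_{i−1} and V_i is at least τ, i.e. |P_{i−1} ∩ V_i| ≥ τ·|P_{i−1} ∪ V_i|. Then the total number of zero entries of the group lying in nonempty columns satisfies Σ_{i=0}^{h−1} (λ − |V_i|) ≤ h·((2−τ)·λ − λ₀). -/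
/-!
Every row is large: the Jaccard condition gives `|V_i| ≥ τ·|P_{i−1} ∪ V_i| ≥ τ·λ₀`
(and `|V₀| ≥ τ·λ₀` as `τ ≤ 1`). Hence row `i` has at most `λ − τ·λ₀` zeros, and
`λ − τ·λ₀ ≤ (2 − τ)·λ − λ₀` because `(1 − τ)·λ₀ ≤ (1 − τ)·λ`.
-/

open Finset

theorem mul_card_le_card_of_mul_card_union_le_card_inter {α : Type*} [DecidableEq α]
    {τ : ℝ} (hτ : 0 ≤ τ) {A B C : Finset α} (hC : C ⊆ A)
    (hAB : τ * (#(A ∪ B) : ℝ) ≤ #(A ∩ B)) :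
    τ * (#C : ℝ) ≤ #B := by
  have hCU : (#C : ℝ) ≤ #(A ∪ B) := by
    exact_mod_cast card_le_card (hC.trans subset_union_left)
  have hIB : (#(A ∩ B) : ℝ) ≤ #B := by
    exact_mod_cast card_le_card inter_subset_right
  calc τ * (#C : ℝ) ≤ τ * #(A ∪ B) := mul_le_mul_of_nonneg_left hCU hτ
    _ ≤ #(A ∩ B) := hAB
    _ ≤ #B := hIB

theorem mul_card_zero_le_card_of_jaccard_ge {α : Type*} [DecidableEq α] {τ : ℝ}
    (hτ0 : 0 ≤ τ) (hτ1 : τ ≤ 1) {h : ℕ} {V : ℕ → Finset α}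
    (hsim : ∀ i, 1 ≤ i → i ≤ h - 1 →
      τ * (#((range i).biUnion V ∪ V i) : ℝ) ≤ #((range i).biUnion V ∩ V i))
    {i : ℕ} (hi : i < h) :
    τ * (#(V 0) : ℝ) ≤ #(V i) := by
  rcases Nat.eq_zero_or_pos i with rfl | hipos
  · exact mul_le_of_le_one_left (Nat.cast_nonneg _) hτ1
  · refine mul_card_le_card_of_mul_card_union_le_card_inter hτ0 ?_ (hsim i hipos (by omega))
    exact subset_biUnion_of_mem V (mem_range.2 hipos)

theorem total_zeros_bound_general {α : Type*} [DecidableEq α] (τ : ℝ) (hτ0 : 0 ≤ τ) (hτ1 : τ ≤ 1)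
    (h : ℕ) (V : ℕ → Finset α)
    (hsim : ∀ i, 1 ≤ i → i ≤ h - 1 →
      ((((Finset.range i).biUnion V) ∩ V i).card : ℝ)
        ≥ τ * ((((Finset.range i).biUnion V) ∪ V i).card : ℝ)) :
    ∑ i ∈ Finset.range h,
        ((((Finset.range h).biUnion V).card : ℝ) - ((V i).card : ℝ))
      ≤ (h : ℝ) * ((2 - τ) * (((Finset.range h).biUnion V).card : ℝ) - ((V 0).card : ℝ)) := by
  rcases Nat.eq_zero_or_pos h with rfl | hpos
  · simp
  have hV0_le : (#(V 0) : ℝ) ≤ #((range h).biUnion V) := by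
    exact_mod_cast card_le_card (subset_biUnion_of_mem V (mem_range.2 hpos))
  have hrow : ∀ i ∈ range h, (#((range h).biUnion V) : ℝ) - #(V i)
      ≤ (2 - τ) * #((range h).biUnion V) - #(V 0) := by
    intro i hi
    have hVi := mul_card_zero_le_card_of_jaccard_ge hτ0 hτ1 hsim (mem_range.1 hi)
    linarith [mul_nonneg (sub_nonneg.2 hτ1) (sub_nonneg.2 hV0_le)]
  simpa using sum_le_card_nsmul _ _ _ hrow

/-- Let `τ ∈ [0,1]`, let `V₀, …, V_{h−1}` be finite sets with `V₀`
nonempty, let `P i = V₀ ∪ ⋯ ∪ V i` (so `(range i).biUnion V = P (i−1)`, with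
`P (−1) = ∅`), `λ = |P (h−1)|`, `λ₀ = |V₀|`. If for every `1 ≤ i ≤ h−1` the Jaccard
similarity of `P (i−1)` and `V i` is at least `τ`, i.e.
`|P (i−1) ∩ V i| ≥ τ·|P (i−1) ∪ V i|`, then
`∑_{i=0}^{h−1} (λ − |V i|) ≤ h·((2−τ)·λ − λ₀)`. -/
theorem total_zeros_bound {α : Type*} [DecidableEq α] (τ : ℝ) (hτ0 : 0 ≤ τ) (hτ1 : τ ≤ 1)
    (h : ℕ) (V : ℕ → Finset α) (hV0 : (V 0).Nonempty)
    (hsim : ∀ i, 1 ≤ i → i ≤ h - 1 →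
      ((((Finset.range i).biUnion V) ∩ V i).card : ℝ)
        ≥ τ * ((((Finset.range i).biUnion V) ∪ V i).card : ℝ)) :
    ∑ i ∈ Finset.range h,
        ((((Finset.range h).biUnion V).card : ℝ) - ((V i).card : ℝ))
      ≤ (h : ℝ) * ((2 - τ) * (((Finset.range h).biUnion V).card : ℝ) - ((V 0).card : ℝ)) :=
  total_zeros_bound_general τ hτ0 hτ1 h V hsim
end

section
/- (Theorem 1, general Δ_W.) Let τ ∈ (0,1] and Δ_W ≥ 1 be a natural number. Let W₀, …, W_{h−1} be finite sets of natural numbers (the nonzero-column indices of h rows), and for each i let V_i = { j : ∃ k ∈ W_i with j·Δ_W ≤ k < (j+1)·Δ_W } be the quotient row of W_i with respect to the uniform column partition of width Δ_W. Let P_i = V₀ ∪ ⋯ ∪ V_i (with P_{−1} = ∅), λ = |P_{h−1}|, λ₀ = |V₀|, and assume V₀ is nonempty. Suppose that (i) for every 1 ≤ i ≤ h−1, |P_{i−1} ∩ V_i| ≥ τ·|P_{i−1} ∪ V_i|, and (ii) λ ≤ λ₀/(1 − τ/2). Then the density of the group after removing empty column-blocks satisfies (Σ_{i=0}^{h−1}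 |W_i|) / (h·λ·Δ_W) ≥ τ/(2·Δ_W). -/
/-!
Every column block met by row `i` contains one of its nonzero columns, so `|W i| ≥ |V i|`.
The row `V 0` alone covers a `1 - τ/2 ≥ 1/2` fraction of the `λ` nonempty blocks, and by the
Jaccard condition every later `V i` has at least `τ` times as many blocks as the prefix union
before it, which contains `V 0`. Hence every row meets at least `τλ/2` blocks, and the
`h` rows together have at least `hτλ/2` nonzero entries among the `hλΔ_W` slots.
-/

open Finset

theorem card_le_card_of_forall_mem_block {W V : Finset ℕ} {d : ℕ}
    (hV : ∀ j ∈ V, ∃ k ∈ W, j * d ≤ k ∧ k < (j + 1) * d) : #V ≤ #W := by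
  have hsub : V ⊆ W.image (· / d) := fun j hj => by
    obtain ⟨k, hk, hlo, hhi⟩ := hV j hj
    exact mem_image.mpr ⟨k, hk, Nat.div_eq_of_lt_le hlo hhi⟩
  exact (card_le_card hsub).trans card_image_le

theorem mul_card_le_card_of_mul_card_union_le {α : Type*} [DecidableEq α] {A B : Finset α}
    {τ : ℝ} (hτ : 0 ≤ τ) (hsim : τ * #(A ∪ B) ≤ #(A ∩ B)) : τ * #A ≤ #B := by
  have hA : (#A : ℝ) ≤ #(A ∪ B) := by exact_mod_cast card_le_card subset_union_left
  have hB : (#(A ∩ B) : ℝ) ≤ #B := by exact_mod_cast card_le_card inter_subset_right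
  nlinarith

section PrefixUnion

variable {α : Type*} [DecidableEq α] {V : ℕ → Finset α} {τ : ℝ} {h : ℕ}

theorem card_le_card_biUnion_range {n : ℕ} (hn : 0 < n) :
    #(V 0) ≤ #((range n).biUnion V) :=
  card_le_card (subset_biUnion_of_mem V (mem_range.mpr hn))

theorem half_mul_card_biUnion_le_card (hτ0 : 0 ≤ τ) (hτ1 : τ ≤ 1)
    (hsim : ∀ i, 1 ≤ i → i ≤ h - 1 →
      τ * #((range i).biUnion V ∪ V i) ≤ (#((range i).biUnion V ∩ V i) : ℝ))
    (hcover : (1 - τ / 2) * #((range h).biUnion V) ≤ (#(V 0) : ℝ))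
    {i : ℕ} (hi : i < h) :
    τ * #((range h).biUnion V) / 2 ≤ (#(V i) : ℝ) := by
  have hhalf : τ * #((range h).biUnion V) / 2 ≤ (1 - τ / 2) * #((range h).biUnion V) := by
    nlinarith [(#((range h).biUnion V)).cast_nonneg (α := ℝ)]
  rcases Nat.eq_zero_or_pos i with rfl | hipos
  · linarith
  · have hprefix : (#(V 0) : ℝ) ≤ #((range i).biUnion V) := by
      exact_mod_cast card_le_card_biUnion_range hipos
    have hgrowth : τ * #((range i).biUnion V) ≤ (#(V i) : ℝ) :=
      mul_card_le_card_of_mul_card_union_le hτ0 (hsim i hipos (Nat.le_sub_one_of_lt hi))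
    nlinarith

end PrefixUnion

theorem group_density_ge_general_general (τ : ℝ) (hτ0 : 0 < τ) (hτ1 : τ ≤ 1)
    (ΔW : ℕ) (h : ℕ) (hh : 1 ≤ h)
    (W V : ℕ → Finset ℕ)
    (hquot : ∀ i j, j ∈ V i ↔ ∃ k ∈ W i, j * ΔW ≤ k ∧ k < (j + 1) * ΔW)
    (hV0 : (V 0).Nonempty)
    (hsim : ∀ i, 1 ≤ i → i ≤ h - 1 →
      ((((Finset.range i).biUnion V) ∩ V i).card : ℝ)
        ≥ τ * ((((Finset.range i).biUnion V) ∪ V i).card : ℝ))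
    (hgrow : ((((Finset.range h).biUnion V).card : ℝ))
        ≤ ((V 0).card : ℝ) / (1 - τ / 2)) :
    (∑ i ∈ Finset.range h, ((W i).card : ℝ))
        / ((h : ℝ) * (((Finset.range h).biUnion V).card : ℝ) * (ΔW : ℝ))
      ≥ τ / (2 * (ΔW : ℝ)) := by
  set lam : ℝ := (#((range h).biUnion V) : ℝ)
  have hlam : 0 < lam :=
    Nat.cast_pos.mpr (hV0.card_pos.trans_le (card_le_card_biUnion_range hh))
  have hcover : (1 - τ / 2) * lam ≤ #(V 0) := by
    rw [le_div_iff₀ (by linarith)] at hgrow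
    linarith
  have hrow : ∀ i ∈ range h, τ * lam / 2 ≤ (#(W i) : ℝ) := fun i hi =>
    calc τ * lam / 2 ≤ #(V i) :=
          half_mul_card_biUnion_le_card hτ0.le hτ1 hsim hcover (mem_range.mp hi)
      _ ≤ #(W i) := by
          exact_mod_cast card_le_card_of_forall_mem_block fun j hj => (hquot i j).mp hj
  have hsum : (h : ℝ) * (τ * lam / 2) ≤ ∑ i ∈ range h, (#(W i) : ℝ) := by
    simpa using card_nsmul_le_sum (range h) _ _ hrow
  rw [ge_iff_le, ← div_div, ← div_div]
  refine div_le_div_of_nonneg_right ?_ ΔW.cast_nonneg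
  rw [le_div_iff₀ (by positivity)]
  linarith

/-- **Theorem 1, general `Δ_W`.** Let `τ ∈ (0,1]` and `Δ_W ≥ 1`.
Let `W₀, …, W_{h−1}` be finite sets of naturals (the nonzero-column indices of
`h` rows), and let `V i` be the quotient row of `W i` with respect to the
uniform column partition of width `Δ_W`:
`j ∈ V i ↔ ∃ k ∈ W i, j·Δ_W ≤ k < (j+1)·Δ_W`. With `P i = V₀ ∪ ⋯ ∪ V i`
(so `(range i).biUnion V = P (i−1)`), `λ = |P (h−1)|`, `λ₀ = |V₀|`, assume `V₀`
nonempty, (i) for every `1 ≤ i ≤ h−1`, `|P (i−1) ∩ V i| ≥ τ·|P (i−1) ∪ V i|`,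
and (ii) `λ ≤ λ₀/(1 − τ/2)`. Then
`(∑_{i=0}^{h−1} |W i|) / (h·λ·Δ_W) ≥ τ/(2·Δ_W)`. -/
theorem group_density_ge_general (τ : ℝ) (hτ0 : 0 < τ) (hτ1 : τ ≤ 1)
    (ΔW : ℕ) (hΔW : 1 ≤ ΔW) (h : ℕ) (hh : 1 ≤ h)
    (W V : ℕ → Finset ℕ)
    (hquot : ∀ i j, j ∈ V i ↔ ∃ k ∈ W i, j * ΔW ≤ k ∧ k < (j + 1) * ΔW)
    (hV0 : (V 0).Nonempty)
    (hsim : ∀ i, 1 ≤ i → i ≤ h - 1 →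
      ((((Finset.range i).biUnion V) ∩ V i).card : ℝ)
        ≥ τ * ((((Finset.range i).biUnion V) ∪ V i).card : ℝ))
    (hgrow : ((((Finset.range h).biUnion V).card : ℝ))
        ≤ ((V 0).card : ℝ) / (1 - τ / 2)) :
    (∑ i ∈ Finset.range h, ((W i).card : ℝ))
        / ((h : ℝ) * (((Finset.range h).biUnion V).card : ℝ) * (ΔW : ℝ))
      ≥ τ / (2 * (ΔW : ℝ)) :=
  group_density_ge_general_general τ hτ0 hτ1 ΔW h hh W V hquot hV0 hsim hgrow
end

section
/- (Pathological example for the naive merging rule.) Fix a natural number m ≥ 1 and set ℓ = m⁴. Define V_i = {0} for 0 ≤ i < ℓ and V_{ℓ+j} = {0, 1, …, j} for 0 ≤ j < m, and let P_i = V₀ ∪ ⋯ ∪ V_i. Then for every 1 ≤ i ≤ ℓ + m − 1, the Jaccard similarity of P_{i−1} and V_i is at least 1/2, i.e. 2·|P_{i−1} ∩ V_i| ≥ |P_{i−1} ∪ V_i|. -/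
/-!
Each new row contains the current pattern: before row `ℓ` both are `{0}`, and at row `ℓ + j`
(`j ≥ 1`) the pattern is `{0, …, j - 1}` while the row is `{0, …, j}`. So the Jaccard similarity
is `j / (j + 1) ≥ 1/2`.
-/

open Finset

theorem card_union_le_two_mul_card_inter_of_subset {α : Type*} [DecidableEq α] {A B : Finset α}
    (hAB : A ⊆ B) (hcard : #B ≤ 2 * #A) : #(A ∪ B) ≤ 2 * #(A ∩ B) := by
  rwa [union_eq_right.mpr hAB, inter_eq_left.mpr hAB]

section PathologicalSequence

variable {ℓ m : ℕ} {V : ℕ → Finset ℕ}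

theorem biUnion_range_eq_singleton_zero (hVlow : ∀ i < ℓ, V i = {0}) {i : ℕ}
    (hi : 1 ≤ i) (hiℓ : i ≤ ℓ) : (range i).biUnion V = {0} := by
  ext x
  simp only [mem_biUnion, mem_range, mem_singleton]
  constructor
  · rintro ⟨k, hk, hx⟩
    simpa [hVlow k (by omega)] using hx
  · rintro rfl
    exact ⟨0, hi, by simp [hVlow 0 (by omega)]⟩

theorem biUnion_range_add_eq_range (hVlow : ∀ i < ℓ, V i = {0})
    (hVhigh : ∀ j < m, V (ℓ + j) = range (j + 1)) {j : ℕ} (hj : 1 ≤ j) (hjm : j ≤ m) :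
    (range (ℓ + j)).biUnion V = range j := by
  ext x
  simp only [mem_biUnion, mem_range]
  constructor
  · rintro ⟨k, hk, hx⟩
    rcases lt_or_ge k ℓ with hkℓ | hkℓ
    · rw [hVlow k hkℓ, mem_singleton] at hx
      omega
    · obtain ⟨j', rfl⟩ := Nat.exists_eq_add_of_le hkℓ
      rw [hVhigh j' (by omega), mem_range] at hx
      omega
  · intro hx
    exact ⟨ℓ + x, by omega, by rw [hVhigh x (by omega), mem_range]; omega⟩

end PathologicalSequence

theorem pathological_jaccard_ge_half_general (m : ℕ)
    (V : ℕ → Finset ℕ)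
    (hVlow : ∀ i, i < m ^ 4 → V i = {0})
    (hVhigh : ∀ j, j < m → V (m ^ 4 + j) = Finset.range (j + 1)) :
    ∀ i, 1 ≤ i → i ≤ m ^ 4 + m - 1 →
      2 * (((Finset.range i).biUnion V) ∩ V i).card
        ≥ (((Finset.range i).biUnion V) ∪ V i).card := by
  intro i hi hiub
  rcases le_or_gt i (m ^ 4) with hiℓ | hiℓ
  · have hVi : V i = {0} := by
      rcases hiℓ.lt_or_eq with hiℓ | rfl
      · exact hVlow i hiℓ
      · simpa using hVhigh 0 (by omega)
    rw [biUnion_range_eq_singleton_zero hVlow hi hiℓ, hVi, inter_self, union_self]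
    omega
  · obtain ⟨j, rfl⟩ : ∃ j, i = m ^ 4 + j := ⟨i - m ^ 4, by omega⟩
    rw [biUnion_range_add_eq_range hVlow hVhigh (by omega) (by omega), hVhigh j (by omega)]
    apply card_union_le_two_mul_card_inter_of_subset (range_subset_range.mpr (by omega))
    simp only [card_range]
    omega

/-- **pathological example for the naive merging rule.**
Fix `m ≥ 1` and set `ℓ = m⁴`. Define `V i = {0}` for `0 ≤ i < ℓ` and
`V (ℓ+j) = {0, 1, …, j}` for `0 ≤ j < m`; let `P i = V₀ ∪ ⋯ ∪ V i`
(so `(range i).biUnion V = P (i−1)`). Then for every `1 ≤ i ≤ ℓ + m − 1`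
the Jaccard similarity of `P (i−1)` and `V i` is at least `1/2`, i.e.
`2·|P (i−1) ∩ V i| ≥ |P (i−1) ∪ V i|`. -/
theorem pathological_jaccard_ge_half (m : ℕ) (hm : 1 ≤ m)
    (V : ℕ → Finset ℕ)
    (hVlow : ∀ i, i < m ^ 4 → V i = {0})
    (hVhigh : ∀ j, j < m → V (m ^ 4 + j) = Finset.range (j + 1)) :
    ∀ i, 1 ≤ i → i ≤ m ^ 4 + m - 1 →
      2 * (((Finset.range i).biUnion V) ∩ V i).card
        ≥ (((Finset.range i).biUnion V) ∪ V i).card :=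
  pathological_jaccard_ge_half_general m V hVlow hVhigh
end
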